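/- arXiv:math/0512117 — 2 statements merged into one kernel-verified Lean document; each statement's English description precedes it below -/
import Mathlib

section
/- For every positive integer N, the index of the congruence subgroup Γ₁(N) in SL(2,ℤ) equals N² ∏_{p | N} (1 − 1/p²), the product running over the prime divisors p of N; equivalently, [SL(2,ℤ) : Γ₁(N)] · ∏_{p | N} p² = N² · ∏_{p | N} (p² − 1). -/
/-!
`Γ₁(N)` is the stabilizer of `e₁ = (1, 0)` for the action of `SL(2, ℤ)` on `(ℤ/N)²` through
reduction mod `N`: `a ≡ 1` and `c ≡ 0` already force `d ≡ 1` because `ad - bc = 1`. By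
orbit–stabilizer the index is the size of the orbit of `e₁`, i.e. the number of pairs generating
the unit ideal of `ℤ/N`, since each such pair lifts to a coprime pair of integers and hence to the
first column of a matrix in `SL(2, ℤ)`. This count is multiplicative by the Chinese remainder
theorem, and in the local ring `ℤ/p^k` a pair is unimodular iff one entry is a unit, which leaves
`p^(2k) - p^(2k-2)` pairs.
-/

open Matrix MatrixGroups CongruenceSubgroup

theorem Int.exists_isCoprime_add_mul {c d n : ℤ} (hd : d ≠ 0)
    (h : ∀ p : ℕ, p.Prime → (p : ℤ) ∣ c → (p : ℤ) ∣ d → ¬ (p : ℤ) ∣ n) :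
    ∃ k : ℤ, IsCoprime (c + n * k) d := by
  -- With this `k`, every prime factor of `d` divides exactly one of `c` and `n * k`.
  set k : ℕ := ∏ p ∈ d.natAbs.primeFactors.filter (fun p : ℕ => ¬ (p : ℤ) ∣ c), p
  have dvd_k {p : ℕ} (hp : p.Prime) : p ∣ k ↔ (p : ℤ) ∣ d ∧ ¬ (p : ℤ) ∣ c := by
    rw [Prime.dvd_finsetProd_iff hp.prime]
    constructor
    · rintro ⟨q, hq, hpq⟩
      rw [Finset.mem_filter, Nat.mem_primeFactors] at hq
      obtain rfl := (Nat.prime_dvd_prime_iff_eq hp hq.1.1).mp hpq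
      exact ⟨Int.natCast_dvd.mpr hq.1.2.1, hq.2⟩
    · rintro ⟨hpd, hpc⟩
      exact ⟨p, Finset.mem_filter.mpr
        ⟨Nat.mem_primeFactors.mpr ⟨hp, Int.natCast_dvd.mp hpd, by simpa using hd⟩, hpc⟩, dvd_rfl⟩
  refine ⟨k, Int.isCoprime_iff_gcd_eq_one.mpr (Nat.coprime_of_dvd fun p hp hpc hpd => ?_)⟩
  rw [← Int.natCast_dvd] at hpc hpd
  by_cases hc : (p : ℤ) ∣ c
  · have hpnk : (p : ℤ) ∣ n * k := (dvd_add_right hc).mp hpc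
    rcases (Nat.prime_iff_prime_int.mp hp).dvd_mul.mp hpnk with hpn | hpk
    · exact h p hp hc hpd hpn
    · exact ((dvd_k hp).mp (Int.natCast_dvd_natCast.mp hpk)).2 hc
  · have hpk : (p : ℤ) ∣ n * k :=
      (Int.natCast_dvd_natCast.mpr ((dvd_k hp).mpr ⟨hpd, hc⟩)).mul_left n
    exact hc ((dvd_add_left hpk).mp hpc)

theorem ZMod.exists_isCoprime_intCast_eq {N : ℕ} [NeZero N] {a b : ZMod N}
    (hab : IsCoprime a b) : ∃ c d : ℤ, IsCoprime c d ∧ (c : ZMod N) = a ∧ (d : ZMod N) = b := by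
  have hd : (b.val : ℤ) + N ≠ 0 := by have := NeZero.ne N; omega
  obtain ⟨k, hk⟩ := Int.exists_isCoprime_add_mul (c := a.val) (n := N) hd fun p hp hpa hpb hpN => by
    have := Fact.mk hp
    have hpN : p ∣ N := Int.natCast_dvd_natCast.mp hpN
    have hpb : (p : ℤ) ∣ b.val := (dvd_add_left (Int.natCast_dvd_natCast.mpr hpN)).mp hpb
    have hab := hab.map (ZMod.castHom hpN (ZMod p))
    rw [ZMod.castHom_apply, ZMod.castHom_apply, ZMod.cast_eq_val, ZMod.cast_eq_val,
      ← Int.cast_natCast, ← Int.cast_natCast b.val,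
      (ZMod.intCast_zmod_eq_zero_iff_dvd _ p).mpr hpa, (ZMod.intCast_zmod_eq_zero_iff_dvd _ p).mpr hpb,
      isCoprime_zero_left] at hab
    exact not_isUnit_zero hab
  refine ⟨_, _, hk, ?_, ?_⟩ <;> simp

theorem Prod.isCoprime_iff {S T : Type*} [CommSemiring S] [CommSemiring T] {a b : S × T} :
    IsCoprime a b ↔ IsCoprime a.1 b.1 ∧ IsCoprime a.2 b.2 := by
  refine ⟨fun h => ⟨h.map (RingHom.fst S T), h.map (RingHom.snd S T)⟩, ?_⟩
  rintro ⟨⟨x, y, h⟩, ⟨x', y', h'⟩⟩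
  exact ⟨(x, x'), (y, y'), Prod.ext h h'⟩

theorem IsLocalRing.isCoprime_iff {R : Type*} [CommSemiring R] [IsLocalRing R] {a b : R} :
    IsCoprime a b ↔ IsUnit a ∨ IsUnit b := by
  constructor
  · rintro ⟨x, y, h⟩
    exact (isUnit_or_isUnit_of_add_one h).imp isUnit_of_mul_isUnit_right
      isUnit_of_mul_isUnit_right
  · rintro (⟨u, rfl⟩ | ⟨u, rfl⟩)
    exacts [⟨↑u⁻¹, 0, by simp⟩, ⟨0, ↑u⁻¹, by simp⟩]

def coprimePairs (R : Type*) [CommSemiring R] : Set (Fin 2 → R) := {v | IsCoprime (v 0) (v 1)}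

section CoprimePairs

variable {R S T : Type*} [CommSemiring R] [CommSemiring S] [CommSemiring T]

theorem RingEquiv.ncard_coprimePairs_eq (e : R ≃+* S) :
    (coprimePairs R).ncard = (coprimePairs S).ncard := by
  rw [← Nat.card_coe_set_eq, ← Nat.card_coe_set_eq]
  exact Nat.card_congr ((Equiv.piCongrRight fun _ => e.toEquiv).subtypeEquiv fun v =>
    ⟨fun h => h.map e.toRingHom, fun h => by simpa [coprimePairs] using h.map e.symm.toRingHom⟩)

theorem ncard_coprimePairs_prod :
    (coprimePairs (S × T)).ncard = (coprimePairs S).ncard * (coprimePairs T).ncard := by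
  simp only [← Nat.card_coe_set_eq, ← Nat.card_prod]
  exact Nat.card_congr (((Equiv.arrowProdEquivProdArrow _ _ _).subtypeEquiv fun _ =>
    Prod.isCoprime_iff).trans Equiv.subtypeProdEquivProd)

theorem IsLocalRing.ncard_coprimePairs_add_sq [IsLocalRing R] [Finite R] :
    (coprimePairs R).ncard + (nonunits R).ncard ^ 2 = Nat.card R ^ 2 := by
  have hcompl : (coprimePairs R)ᶜ = {v | ∀ i, v i ∈ nonunits R} := by
    ext v
    simp [coprimePairs, IsLocalRing.isCoprime_iff, mem_nonunits_iff, Fin.forall_fin_two]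
  have hpow : ({v | ∀ i, v i ∈ nonunits R} : Set (Fin 2 → R)).ncard =
      (nonunits R).ncard ^ 2 := by
    have := Nat.card_congr (Equiv.subtypePiEquivPi (α := Fin 2) (p := fun _ a => a ∈ nonunits R))
    rwa [Nat.card_fun, Nat.card_fin] at this
  rw [← hpow, ← hcompl, Set.ncard_add_ncard_compl, Nat.card_fun, Nat.card_fin]

end CoprimePairs

namespace ZMod

section PrimePow

variable {p : ℕ} (hp : p.Prime)
include hp

theorem isLocalRing_prime_pow {k : ℕ} (hk : k ≠ 0) : IsLocalRing (ZMod (p ^ k)) := by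
  have : NeZero (p ^ k) := ⟨pow_ne_zero k hp.ne_zero⟩
  have : Nontrivial (ZMod (p ^ k)) := nontrivial_iff.mpr (Nat.one_lt_pow hk hp.one_lt).ne'
  have mem_nonunits (n : ℕ) : (n : ZMod (p ^ k)) ∈ nonunits _ ↔ p ∣ n := by
    rw [mem_nonunits_iff, isUnit_natCast_iff_not_dvd_pow hp (Nat.pos_of_ne_zero hk), not_not]
  refine .of_nonunits_add fun a b ha hb => ?_
  rw [← natCast_zmod_val a, mem_nonunits] at ha
  rw [← natCast_zmod_val b, mem_nonunits] at hb
  rw [← natCast_zmod_val a, ← natCast_zmod_val b, ← Nat.cast_add, mem_nonunits]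
  exact dvd_add ha hb

theorem ncard_nonunits_prime_pow_succ (m : ℕ) :
    (nonunits (ZMod (p ^ (m + 1)))).ncard = p ^ m := by
  have : NeZero (p ^ (m + 1)) := ⟨pow_ne_zero _ hp.ne_zero⟩
  have hunits : {x : ZMod (p ^ (m + 1)) | IsUnit x}.ncard = p ^ m * (p - 1) := by
    rw [← Nat.totient_prime_pow_succ hp, ← card_units_eq_totient, ← Nat.card_eq_fintype_card,
      ← Set.ncard_range_of_injective Units.val_injective]
    rfl
  have hsum := Set.ncard_add_ncard_compl {x : ZMod (p ^ (m + 1)) | IsUnit x}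
  have hpow : p ^ (m + 1) = p ^ m * (p - 1) + p ^ m := by
    rw [pow_succ, Nat.mul_sub_one, Nat.sub_add_cancel (Nat.le_mul_of_pos_right _ hp.pos)]
  rw [hunits, Nat.card_zmod] at hsum
  change _ + (nonunits _).ncard = _ at hsum
  omega

theorem ncard_coprimePairs_prime_pow_mul {k : ℕ} (hk : k ≠ 0) :
    (coprimePairs (ZMod (p ^ k))).ncard * p ^ 2 = (p ^ k) ^ 2 * (p ^ 2 - 1) := by
  obtain ⟨m, rfl⟩ := Nat.exists_eq_add_one_of_ne_zero hk
  have : NeZero (p ^ (m + 1)) := ⟨pow_ne_zero _ hp.ne_zero⟩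
  have := isLocalRing_prime_pow hp hk
  have hsum := IsLocalRing.ncard_coprimePairs_add_sq (R := ZMod (p ^ (m + 1)))
  have hpow : (p ^ (m + 1)) ^ 2 = (p ^ m) ^ 2 * p ^ 2 := by ring
  rw [ncard_nonunits_prime_pow_succ hp, Nat.card_zmod, hpow] at hsum
  have hcount : (coprimePairs (ZMod (p ^ (m + 1)))).ncard = (p ^ m) ^ 2 * (p ^ 2 - 1) := by
    rw [Nat.mul_sub_one]
    omega
  rw [hcount, hpow]
  ring

end PrimePow

theorem ncard_coprimePairs_mul {a b : ℕ} (hab : a.Coprime b) :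
    (coprimePairs (ZMod (a * b))).ncard =
      (coprimePairs (ZMod a)).ncard * (coprimePairs (ZMod b)).ncard := by
  rw [(chineseRemainder hab).ncard_coprimePairs_eq, ncard_coprimePairs_prod]

theorem ncard_coprimePairs_mul_prod_primeFactors {N : ℕ} (hN : N ≠ 0) :
    (coprimePairs (ZMod N)).ncard * ∏ p ∈ N.primeFactors, p ^ 2 =
      N ^ 2 * ∏ p ∈ N.primeFactors, (p ^ 2 - 1) := by
  induction N using Nat.recOnPosPrimePosCoprime with
  | zero => contradiction
  | one =>
    have : coprimePairs (ZMod 1) = Set.univ :=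
      Set.eq_univ_of_forall fun _ => ⟨0, 0, Subsingleton.elim _ _⟩
    simp [this]
  | prime_pow p k hp hk =>
    rw [Nat.primeFactors_prime_pow hk.ne' hp, Finset.prod_singleton, Finset.prod_singleton,
      ncard_coprimePairs_prime_pow_mul hp hk.ne']
  | coprime a b ha hb hab iha ihb =>
    rw [ncard_coprimePairs_mul hab, hab.primeFactors_mul,
      Finset.prod_union hab.disjoint_primeFactors, Finset.prod_union hab.disjoint_primeFactors]
    calc _ = ((coprimePairs (ZMod a)).ncard * ∏ p ∈ a.primeFactors, p ^ 2) *
          ((coprimePairs (ZMod b)).ncard * ∏ p ∈ b.primeFactors, p ^ 2) := by ring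
      _ = _ := by rw [iha (by omega), ihb (by omega)]; ring

end ZMod

noncomputable instance (N : ℕ) : MulAction SL(2, ℤ) (Fin 2 → ZMod N) :=
  MulAction.compHom _ (SpecialLinearGroup.map (Int.castRingHom (ZMod N)))

namespace CongruenceSubgroup

variable {N : ℕ}

theorem smul_single_zero (A : SL(2, ℤ)) :
    A • (Pi.single 0 1 : Fin 2 → ZMod N) = fun i => ((A i 0 : ℤ) : ZMod N) := by
  change (SpecialLinearGroup.map (Int.castRingHom (ZMod N)) A).1 *ᵥ Pi.single 0 1 = _
  ext i
  simp

theorem Gamma1_eq_stabilizer :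
    Gamma1 N = MulAction.stabilizer SL(2, ℤ) (Pi.single 0 1 : Fin 2 → ZMod N) := by
  ext A
  have hdet : ((A 0 0 * A 1 1 - A 0 1 * A 1 0 : ℤ) : ZMod N) = 1 := by
    rw [← det_fin_two, A.det_coe, Int.cast_one]
  push_cast at hdet
  rw [Gamma1_mem, MulAction.mem_stabilizer_iff, smul_single_zero, funext_iff, Fin.forall_fin_two]
  simp only [Pi.single_eq_same]
  constructor
  · rintro ⟨h00, -, h10⟩
    exact ⟨h00, h10⟩
  · rintro ⟨h00, h10⟩
    refine ⟨h00, ?_, h10⟩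
    simpa [h00, h10] using hdet

theorem orbit_single_zero [NeZero N] :
    MulAction.orbit SL(2, ℤ) (Pi.single 0 1 : Fin 2 → ZMod N) = coprimePairs (ZMod N) := by
  ext v
  constructor
  · rintro ⟨A, rfl⟩
    change A • _ ∈ _
    rw [smul_single_zero]
    exact (A.isCoprime_col 0).map (Int.castRingHom (ZMod N))
  · intro hv
    obtain ⟨c, d, hcd, hc, hd⟩ := ZMod.exists_isCoprime_intCast_eq hv
    obtain ⟨A, hAc, hAd⟩ := hcd.exists_SL2_col 0
    refine ⟨A, (smul_single_zero A).trans ?_⟩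
    ext i
    fin_cases i
    exacts [hAc ▸ hc, hAd ▸ hd]

theorem index_Gamma1 [NeZero N] : (Gamma1 N).index = (coprimePairs (ZMod N)).ncard := by
  rw [Gamma1_eq_stabilizer, MulAction.index_stabilizer, orbit_single_zero]

end CongruenceSubgroup

/-- [SL(2,ℤ) : Γ₁(N)] = N² ∏_{p ∣ N} (1 − 1/p²), stated as
[SL(2,ℤ) : Γ₁(N)] · ∏_{p ∣ N} p² = N² · ∏_{p ∣ N} (p² − 1). -/
theorem gamma1_index (N : ℕ) (hN : 0 < N) :
    (CongruenceSubgroup.Gamma1 N).index * ∏ p ∈ N.primeFactors, p ^ 2 =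
      N ^ 2 * ∏ p ∈ N.primeFactors, (p ^ 2 - 1) := by
  have : NeZero N := ⟨hN.ne'⟩
  rw [CongruenceSubgroup.index_Gamma1]
  exact ZMod.ncard_coprimePairs_mul_prod_primeFactors hN.ne'
end

section
/- For a positive integer N, the congruence subgroup Γ₀(N) contains an element of order 6 if and only if the congruence a² − a + 1 ≡ 0 (mod N) has a solution; that is, there exists A ∈ Γ₀(N) with orderOf A = 6 if and only if there exists a ∈ ℤ/N with a² − a + 1 = 0. -/
/-!
By Cayley–Hamilton, `A ∈ SL(2, R)` with trace `t` satisfies `A² = t A - 1`, hence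
`A³ = (t² - 1) A - t`. If `A` has order 6, then `A³` is an involution, and the only involution of
`SL(2, R)` (for `2 ≠ 0` in a domain) is `-1`; so `(t² - 1) A = (t - 1) • 1`, which forces
`t² = 1` since `A ≠ ±1`, and `t = -1` would give `A³ = 1`. Conversely `t = 1` gives `A³ = -1`.
Thus order 6 means trace 1, and for `A = !![a, b; c, d]` of trace 1 we get `a² - a + 1 = -b c`.
In `Γ₀(N)` this vanishes mod `N`, and a root `a` mod `N` with `a² - a + 1 = N k` lifts to
`!![a, -k; N, 1 - a]`.
-/

open Matrix MatrixGroups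

namespace Matrix

variable {R : Type*} [CommRing R]

theorem sq_eq_trace_smul_sub_det_smul_one (M : Matrix (Fin 2) (Fin 2) R) :
    M ^ 2 = M.trace • M - M.det • 1 := by
  ext i j
  fin_cases i <;> fin_cases j <;>
    simp only [sq, mul_apply, Fin.sum_univ_two, trace_fin_two, det_fin_two, Matrix.sub_apply,
      Matrix.smul_apply, smul_eq_mul, one_apply, Fin.mk_one, Fin.zero_eta, Fin.isValue,
      Fin.reduceEq, if_true, if_false] <;>
    ring

namespace SpecialLinearGroup

theorem coe_sq_eq_trace_smul_sub_one (A : SL(2, R)) :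
    (A : Matrix (Fin 2) (Fin 2) R) ^ 2 = trace (A : Matrix (Fin 2) (Fin 2) R) • ↑A - 1 := by
  rw [sq_eq_trace_smul_sub_det_smul_one, A.det_coe, one_smul]

theorem coe_pow_three_eq (A : SL(2, R)) :
    (A : Matrix (Fin 2) (Fin 2) R) ^ 3 =
      (trace (A : Matrix (Fin 2) (Fin 2) R) ^ 2 - 1) • ↑A -
        trace (A : Matrix (Fin 2) (Fin 2) R) • 1 := by
  rw [pow_succ, coe_sq_eq_trace_smul_sub_one, sub_mul, smul_mul_assoc, ← sq,
    coe_sq_eq_trace_smul_sub_one, one_mul]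
  module

theorem neg_one_ne_one [NeZero (2 : R)] : (-1 : SL(2, R)) ≠ 1 := fun h => by
  have h00 := congrArg (fun B : SL(2, R) => (B : Matrix (Fin 2) (Fin 2) R) 0 0) h
  simp only [coe_neg, coe_one, neg_apply, one_apply_eq] at h00
  exact two_ne_zero (by linear_combination -h00 : (2 : R) = 0)

variable [IsDomain R]

theorem eq_one_or_eq_neg_one_of_smul_eq_smul_one {A : SL(2, R)} {c d : R} (hc : c ≠ 0)
    (h : c • (A : Matrix (Fin 2) (Fin 2) R) = d • 1) : A = 1 ∨ A = -1 := by
  have h01 : A 0 1 = 0 := by simpa [hc] using congrFun₂ h 0 1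
  have h10 : A 1 0 = 0 := by simpa [hc] using congrFun₂ h 1 0
  have h11 : A 1 1 = A 0 0 := by
    have e00 := congrFun₂ h 0 0
    have e11 := congrFun₂ h 1 1
    simp only [smul_apply, one_apply_eq, smul_eq_mul, mul_one] at e00 e11
    exact mul_left_cancel₀ hc (e11.trans e00.symm)
  have hsq : A 0 0 * A 0 0 = 1 := by
    have hdet := A.det_coe
    rwa [det_fin_two, h01, h10, h11, mul_zero, sub_zero] at hdet
  rcases mul_self_eq_one_iff.mp hsq with ha | ha <;> [left; right] <;>
    ext i j <;> fin_cases i <;> fin_cases j <;> simp [ha, h01, h10, h11]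

theorem eq_one_or_eq_neg_one_of_sq_eq_one [NeZero (2 : R)] {B : SL(2, R)} (h : B ^ 2 = 1) :
    B = 1 ∨ B = -1 := by
  have h' := congrArg (fun B : SL(2, R) => (B : Matrix (Fin 2) (Fin 2) R)) h
  simp only [coe_pow, coe_one, coe_sq_eq_trace_smul_sub_one, sub_eq_iff_eq_add] at h'
  have htr : trace (B : Matrix (Fin 2) (Fin 2) R) ≠ 0 := by
    intro h0
    have e00 := congrFun₂ h' 0 0
    simp only [h0, zero_smul, smul_apply, one_apply_eq, add_apply, one_add_one_eq_two] at e00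
    exact two_ne_zero e00.symm
  refine eq_one_or_eq_neg_one_of_smul_eq_smul_one htr (d := 2) ?_
  rw [h', two_smul]

theorem trace_eq_one_of_orderOf_eq_six [NeZero (2 : R)] {A : SL(2, R)} (h : orderOf A = 6) :
    trace (A : Matrix (Fin 2) (Fin 2) R) = 1 := by
  have hA3 : A ^ 3 = -1 := by
    have hord : orderOf (A ^ 3) = 2 := by
      rw [orderOf_pow_of_dvd (by norm_num) (by rw [h]; norm_num), h]
    have hsq : (A ^ 3) ^ 2 = 1 := by
      rw [← pow_mul, show 3 * 2 = orderOf A by rw [h], pow_orderOf_eq_one]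
    refine (eq_one_or_eq_neg_one_of_sq_eq_one hsq).resolve_left fun h1 => ?_
    rw [← orderOf_eq_one_iff, hord] at h1
    exact absurd h1 (by norm_num)
  have hA3' := coe_pow_three_eq A
  rw [← coe_pow, hA3, coe_neg, coe_one] at hA3'
  set t := trace (A : Matrix (Fin 2) (Fin 2) R)
  by_cases ht : t ^ 2 - 1 = 0
  · obtain h1 | hm1 := mul_self_eq_one_iff.mp (by linear_combination ht : t * t = 1)
    · exact h1
    · rw [ht, hm1, zero_smul, zero_sub, neg_one_smul, neg_neg] at hA3'
      exact absurd (Subtype.ext (by rwa [coe_neg, coe_one])) (neg_one_ne_one (R := R))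
  · have hsmul : (t ^ 2 - 1) • (A : Matrix (Fin 2) (Fin 2) R) = (t - 1) • 1 := by
      linear_combination (norm := module) -hA3'
    have hA2 : A ^ 2 ≠ 1 := pow_ne_one_of_lt_orderOf (by norm_num) (by rw [h]; norm_num)
    obtain rfl | rfl := eq_one_or_eq_neg_one_of_smul_eq_smul_one ht hsmul <;> simp at hA2

theorem orderOf_eq_six_of_trace_eq_one [CharZero R] {A : SL(2, R)}
    (ht : trace (A : Matrix (Fin 2) (Fin 2) R) = 1) : orderOf A = 6 := by
  have hA3 : A ^ 3 = -1 := by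
    apply Subtype.ext
    rw [coe_pow, coe_pow_three_eq, ht, coe_neg, coe_one]
    module
  have hA2 : A ^ 2 ≠ 1 := fun h2 => by
    rcases eq_one_or_eq_neg_one_of_sq_eq_one h2 with rfl | rfl <;>
      norm_num [trace_one, trace_neg] at ht
  refine orderOf_eq_of_pow_and_pow_div_prime (by norm_num) ?_ fun p hp hdvd => ?_
  · rw [show 6 = 3 * 2 by rfl, pow_mul, hA3, neg_one_sq]
  · obtain rfl | rfl : p = 2 ∨ p = 3 := by
      have : p ≤ 6 := Nat.le_of_dvd (by norm_num) hdvd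
      interval_cases p <;> first | omega | norm_num at hp
    · rw [show 6 / 2 = 3 by rfl, hA3]
      exact neg_one_ne_one
    · exact hA2

theorem orderOf_eq_six_iff_trace_eq_one [CharZero R] {A : SL(2, R)} :
    orderOf A = 6 ↔ trace (A : Matrix (Fin 2) (Fin 2) R) = 1 :=
  ⟨trace_eq_one_of_orderOf_eq_six, orderOf_eq_six_of_trace_eq_one⟩

end SpecialLinearGroup
end Matrix

namespace CongruenceSubgroup

theorem exists_sq_sub_add_one_eq_zero_of_mem_Gamma0 {N : ℕ} {A : SL(2, ℤ)} (hA : A ∈ Gamma0 N)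
    (ht : trace (A : Matrix (Fin 2) (Fin 2) ℤ) = 1) : ∃ a : ZMod N, a ^ 2 - a + 1 = 0 := by
  refine ⟨A 0 0, ?_⟩
  have hdet := A.det_coe
  rw [det_fin_two] at hdet
  rw [trace_fin_two] at ht
  have key : A 0 0 ^ 2 - A 0 0 + 1 = -(A 0 1 * A 1 0) := by
    linear_combination A 0 0 * ht - hdet
  have hkey := congrArg (Int.cast : ℤ → ZMod N) key
  push_cast at hkey
  rw [hkey, Gamma0_mem.mp hA, mul_zero, neg_zero]

theorem exists_mem_Gamma0_trace_eq_one {N : ℕ} {a : ZMod N} (ha : a ^ 2 - a + 1 = 0) :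
    ∃ A ∈ Gamma0 N, trace (A : Matrix (Fin 2) (Fin 2) ℤ) = 1 := by
  obtain ⟨x, rfl⟩ := ZMod.intCast_surjective a
  obtain ⟨k, hk⟩ :=
    (ZMod.intCast_zmod_eq_zero_iff_dvd (x ^ 2 - x + 1) N).mp (by push_cast; exact ha)
  refine ⟨⟨!![x, -k; N, 1 - x], by rw [det_fin_two_of]; linear_combination -hk⟩, ?_, ?_⟩
  · exact Gamma0_mem.mpr (by change ((N : ℤ) : ZMod N) = 0; simp)
  · change trace !![x, -k; (N : ℤ), 1 - x] = 1
    rw [trace_fin_two_of, add_sub_cancel]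

end CongruenceSubgroup

theorem gamma0_order_six_iff_general (N : ℕ) :
    (∃ A ∈ CongruenceSubgroup.Gamma0 N, orderOf A = 6) ↔
      ∃ a : ZMod N, a ^ 2 - a + 1 = 0 := by
  simp only [SpecialLinearGroup.orderOf_eq_six_iff_trace_eq_one]
  constructor
  · rintro ⟨A, hA, ht⟩
    exact CongruenceSubgroup.exists_sq_sub_add_one_eq_zero_of_mem_Gamma0 hA ht
  · rintro ⟨a, ha⟩
    exact CongruenceSubgroup.exists_mem_Gamma0_trace_eq_one ha

/-- Γ₀(N) contains an element of order 6 iff a² − a + 1 ≡ 0 (mod N) is solvable. -/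
theorem gamma0_order_six_iff (N : ℕ) (hN : 0 < N) :
    (∃ A ∈ CongruenceSubgroup.Gamma0 N, orderOf A = 6) ↔
      ∃ a : ZMod N, a ^ 2 - a + 1 = 0 :=
  gamma0_order_six_iff_general N
end
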